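/- arXiv:1312.6537 — 3 statements merged into one kernel-verified Lean document; each statement's English description precedes it below -/
import Mathlib

section
/- Liu's identity: for |q| < 1 and |a| ≤ 1 with a q^n ≠ 1 for all n ≥ 1, ∑_{n=1}^∞ a q^n / (1 − a q^n) = ∑_{n=1}^∞ (1 − a q^{2n}) a^n q^{n^2} / ((1 − q^n)(1 − a q^n)). -/
/-!
Both sides are the sum of the absolutely convergent double series
`∑_{n, m ≥ 1} a ^ m q ^ (n m)`. Summing over `m` first gives the left side. Splitting the
pairs into those with `n ≤ m` and those with `m < n`, and summing the geometric series along
each ray `m = n + j`, resp. `n = m + 1 + j`, gives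
`a ^ n q ^ (n ^ 2) / (1 - a q ^ n) + a ^ n q ^ (n ^ 2 + n) / (1 - q ^ n)`,
which is the `n`-th term on the right.
-/

open Function Set

@[simps]
def upperTriangle : ℕ × ℕ ↪ ℕ × ℕ where
  toFun p := (p.1, p.1 + p.2)
  inj' _ _ h := by
    simp only [Prod.mk.injEq] at h
    exact Prod.ext h.1 (by omega)

@[simps]
def strictLowerTriangle : ℕ × ℕ ↪ ℕ × ℕ where
  toFun p := (p.1 + 1 + p.2, p.1)
  inj' _ _ h := by
    simp only [Prod.mk.injEq] at h
    exact Prod.ext h.2 (by omega)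

theorem isCompl_range_upperTriangle_strictLowerTriangle :
    IsCompl (range upperTriangle) (range strictLowerTriangle) := by
  constructor
  · rw [Set.disjoint_left]
    rintro _ ⟨⟨i, j⟩, rfl⟩ ⟨⟨k, l⟩, h⟩
    simp only [upperTriangle_apply, strictLowerTriangle_apply, Prod.mk.injEq] at h
    omega
  · rw [codisjoint_iff_le_sup]
    rintro ⟨m, n⟩ -
    rcases le_or_gt m n with h | h
    · refine Or.inl ⟨(m, n - m), ?_⟩
      simp only [upperTriangle_apply, Prod.mk.injEq, true_and]
      omega
    · refine Or.inr ⟨(n, m - n - 1), ?_⟩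
      simp only [strictLowerTriangle_apply, Prod.mk.injEq, and_true]
      omega

theorem HasSum.add_upperTriangle_strictLowerTriangle {M : Type*} [AddCommMonoid M]
    [TopologicalSpace M] [ContinuousAdd M] {f : ℕ × ℕ → M} {s t : M}
    (hs : HasSum (f ∘ upperTriangle) s) (ht : HasSum (f ∘ strictLowerTriangle) t) :
    HasSum f (s + t) :=
  (upperTriangle.injective.hasSum_range_iff.2 hs).add_isCompl
    isCompl_range_upperTriangle_strictLowerTriangle
    (strictLowerTriangle.injective.hasSum_range_iff.2 ht)

theorem Summable.hasSum_div_one_sub_of_fiber_eq_geometric {𝕜 : Type*} [NormedDivisionRing 𝕜]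
    {f : ℕ × ℕ → 𝕜} (hf : Summable f) {c r : ℕ → 𝕜} (hr : ∀ n, ‖r n‖ < 1)
    (hfcr : ∀ n m, f (n, m) = c n * r n ^ m) :
    HasSum (fun n => c n / (1 - r n)) (∑' p, f p) := by
  refine hf.hasSum.prod_fiberwise fun n => ?_
  simpa only [hfcr, div_eq_mul_inv] using (hasSum_geometric_of_norm_lt_one (hr n)).mul_left (c n)

def liuDoubleTerm {𝕜 : Type*} [Monoid 𝕜] (a q : 𝕜) (p : ℕ × ℕ) : 𝕜 :=
  a ^ (p.2 + 1) * q ^ ((p.1 + 1) * (p.2 + 1))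

theorem summable_liuDoubleTerm {𝕜 : Type*} [NormedDivisionRing 𝕜] [CompleteSpace 𝕜]
    {a q : 𝕜} (ha : ‖a‖ ≤ 1) (hq : ‖q‖ < 1) : Summable (liuDoubleTerm a q) := by
  have hgeom := summable_geometric_of_lt_one (norm_nonneg q) hq
  refine Summable.of_norm_bounded (hgeom.mul_of_nonneg hgeom (fun _ => by positivity)
    (fun _ => by positivity)) fun p => ?_
  calc ‖liuDoubleTerm a q p‖ = ‖a‖ ^ (p.2 + 1) * ‖q‖ ^ ((p.1 + 1) * (p.2 + 1)) := by
        simp only [liuDoubleTerm, norm_mul, norm_pow]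
    _ ≤ 1 * ‖q‖ ^ (p.1 + p.2) :=
        mul_le_mul (pow_le_one₀ (norm_nonneg a) ha)
          (pow_le_pow_of_le_one (norm_nonneg q) hq.le (by nlinarith)) (by positivity) zero_le_one
    _ = ‖q‖ ^ p.1 * ‖q‖ ^ p.2 := by rw [one_mul, pow_add]

theorem div_one_sub_mul_add_mul_div_one_sub {K : Type*} [Field K] {a x : K} (y : K)
    (hx : 1 - x ≠ 0) (hax : 1 - a * x ≠ 0) :
    y / (1 - a * x) + y * x / (1 - x) = (1 - a * x ^ 2) * y / ((1 - x) * (1 - a * x)) := by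
  field_simp
  ring

theorem stmt16_general (q a : ℂ) (hq : ‖q‖ < 1) (ha : ‖a‖ ≤ 1) :
    ∑' n : ℕ, a * q ^ (n + 1) / (1 - a * q ^ (n + 1))
      = ∑' n : ℕ, (1 - a * q ^ (2 * (n + 1))) * a ^ (n + 1) * q ^ ((n + 1) ^ 2) /
          ((1 - q ^ (n + 1)) * (1 - a * q ^ (n + 1))) := by
  have hqn (n : ℕ) : ‖q ^ (n + 1)‖ < 1 := by
    rw [norm_pow]; exact pow_lt_one₀ (norm_nonneg q) hq n.succ_ne_zero
  have haqn (n : ℕ) : ‖a * q ^ (n + 1)‖ < 1 := by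
    rw [norm_mul]; exact mul_lt_one_of_nonneg_of_lt_one_right ha (norm_nonneg _) (hqn n)
  have hF := summable_liuDoubleTerm ha hq
  have hU := hF.comp_injective upperTriangle.injective
  have hD := hF.comp_injective strictLowerTriangle.injective
  have hL := hF.hasSum_div_one_sub_of_fiber_eq_geometric haqn (c := fun n => a * q ^ (n + 1))
    fun n m => by simp only [liuDoubleTerm]; ring
  have hUsum := hU.hasSum_div_one_sub_of_fiber_eq_geometric haqn
    (c := fun n => a ^ (n + 1) * q ^ ((n + 1) ^ 2))
    fun n m => by simp only [comp_apply, upperTriangle_apply, liuDoubleTerm]; ring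
  have hDsum := hD.hasSum_div_one_sub_of_fiber_eq_geometric hqn
    (c := fun n => a ^ (n + 1) * q ^ ((n + 1) ^ 2) * q ^ (n + 1))
    fun n m => by simp only [comp_apply, strictLowerTriangle_apply, liuDoubleTerm]; ring
  rw [hL.tsum_eq, (hU.hasSum.add_upperTriangle_strictLowerTriangle hD.hasSum).tsum_eq,
    ← (hUsum.add hDsum).tsum_eq]
  refine tsum_congr fun n => ?_
  rw [div_one_sub_mul_add_mul_div_one_sub _ (isUnit_one_sub_of_norm_lt_one (hqn n)).ne_zero
    (isUnit_one_sub_of_norm_lt_one (haqn n)).ne_zero]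
  ring

/-- Liu's identity. -/
theorem stmt16 (q a : ℂ) (hq : ‖q‖ < 1) (ha : ‖a‖ ≤ 1)
    (ha1 : ∀ n : ℕ, 1 ≤ n → a * q ^ n ≠ 1) :
    ∑' n : ℕ, a * q ^ (n + 1) / (1 - a * q ^ (n + 1))
      = ∑' n : ℕ, (1 - a * q ^ (2 * (n + 1))) * a ^ (n + 1) * q ^ ((n + 1) ^ 2) /
          ((1 - q ^ (n + 1)) * (1 - a * q ^ (n + 1))) :=
  stmt16_general q a hq ha
end

section
/- For m ≥ 0, |q| < 1, and |a| ≤ 1: ∑_{n=1}^∞ a n^m q^n / (1 − a q^n) = ∑_{n=1}^∞ n^m (1 − a q^{2n}) a^n q^{n^2} / ((1 − q^n)(1 − a q^n)) + ∑_{k=1}^{m} C(m,k) ∑_{n=1}^∞ n^{m−k} a^n q^{n^2+n} A_k(q^n) / (1 − q^n)^{k+1}, where A_k is the k-th Eulerian polynomial. -/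
/-- Eulerian numbers `A(n,k)` counting permutations of `{1,…,n}` with `k` descents. -/
def eulerianNum : ℕ → ℕ → ℕ
  | 0, 0 => 1
  | 0, _ + 1 => 0
  | n + 1, 0 => eulerianNum n 0
  | n + 1, k + 1 => (k + 2) * eulerianNum n (k + 1) + (n + 1 - (k + 1)) * eulerianNum n k

/-- The Eulerian polynomial `A_k(t)`. -/
noncomputable def eulerianPoly (k : ℕ) (t : ℂ) : ℂ :=
  ∑ i ∈ Finset.range (k + 1), (eulerianNum k i : ℂ) * t ^ i

/-!
Expanding `a qⁿ / (1 - a qⁿ) = ∑_{j ≥ 1} (a qⁿ)ʲ` turns the left side into the absolutely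
convergent double series `∑_{n, j ≥ 1} nᵐ (a qⁿ)ʲ`, which we split along the diagonal. Above it
(`j ≥ n`) the sum over `j` is geometric and gives `nᵐ aⁿ q^{n²} / (1 - a qⁿ)`. Below it
(`n = j + d`, `d ≥ 1`) the summand is `(j + d)ᵐ aʲ q^{j² + jd}`; expanding `(j + d)ᵐ` binomially,
the sum over `d` of `dᵏ (qʲ)ᵈ` is the Eulerian generating function
`∑_{d ≥ 0} (d + 1)ᵏ xᵈ = A_k(x) / (1 - x)^{k+1}`, which follows from Worpitzky's identity
`(j + 1)ᵏ = ∑ᵢ A(k, i) C(j + k - i, k)`. The `k = 0` term merges with the diagonal part into the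
first sum on the right.
-/

open Finset

lemma eulerianNum_eq_zero_of_lt : ∀ {n i : ℕ}, n < i → eulerianNum n i = 0
  | 0, _ + 1, _ => rfl
  | n + 1, i + 1, h => by
    rw [eulerianNum, eulerianNum_eq_zero_of_lt (by omega : n < i + 1),
      eulerianNum_eq_zero_of_lt (by omega : n < i), mul_zero, mul_zero, add_zero]

lemma eulerianNum_succ_succ (n i : ℕ) :
    eulerianNum (n + 1) (i + 1) = (i + 2) * eulerianNum n (i + 1) + (n - i) * eulerianNum n i := by
  rw [eulerianNum, Nat.add_sub_add_right]

lemma succ_mul_choose_eq {i j k : ℕ} (hik : i ≤ k) :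
    (j + 1) * (j + k - i).choose k
      = (i + 1) * (j + k + 1 - i).choose (k + 1) + (k - i) * (j + k - i).choose (k + 1) := by
  obtain ⟨s, rfl⟩ := Nat.exists_eq_add_of_le hik
  rw [show j + (i + s) + 1 - i = j + s + 1 by omega, show j + (i + s) - i = j + s by omega,
    Nat.add_sub_cancel_left, Nat.choose_succ_succ']
  rcases le_or_gt i j with hij | hji
  · obtain ⟨t, rfl⟩ := Nat.exists_eq_add_of_le hij
    have pascal := Nat.choose_succ_right_eq (i + t + s) (i + s)
    rw [show i + t + s - (i + s) = t by omega] at pascal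
    nlinarith [pascal]
  · simp [Nat.choose_eq_zero_of_lt (by omega : j + s < i + s),
      Nat.choose_eq_zero_of_lt (by omega : j + s < i + s + 1)]

/-- Worpitzky's identity. -/
theorem succ_pow_eq_sum_eulerianNum_mul_choose (k j : ℕ) :
    (j + 1) ^ k = ∑ i ∈ range (k + 1), eulerianNum k i * (j + k - i).choose k := by
  induction k with
  | zero => simp [eulerianNum]
  | succ k ih =>
    set f : ℕ → ℕ := fun i ↦ (i + 1) * eulerianNum k i * (j + k + 1 - i).choose (k + 1)
    set g : ℕ → ℕ := fun i ↦ (k - i) * eulerianNum k i * (j + k - i).choose (k + 1)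
    have hf : ∑ i ∈ range (k + 1), f i = ∑ i ∈ range (k + 1), f (i + 1) + f 0 := by
      rw [← sum_range_succ', sum_range_succ _ (k + 1)]
      simp [f, eulerianNum_eq_zero_of_lt (Nat.lt_succ_self k)]
    calc (j + 1) ^ (k + 1) = ∑ i ∈ range (k + 1), (f i + g i) := by
          rw [pow_succ, ih, sum_mul]
          refine sum_congr rfl fun i hi ↦ ?_
          rw [mul_assoc, mul_comm _ (j + 1),
            succ_mul_choose_eq (Nat.lt_succ_iff.mp (mem_range.mp hi))]
          ring
      _ = ∑ i ∈ range (k + 1), (f (i + 1) + g i) + f 0 := by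
          rw [sum_add_distrib, hf, sum_add_distrib]; ring
      _ = _ := by
          rw [sum_range_succ' _ (k + 1)]
          congr 1
          · refine sum_congr rfl fun i _ ↦ ?_
            simp only [f, g, eulerianNum_succ_succ,
              show j + (k + 1) - (i + 1) = j + k - i by omega,
              show j + k + 1 - (i + 1) = j + k - i by omega]
            ring
          · simp [f, eulerianNum, show j + (k + 1) = j + k + 1 by omega]

section Generating

variable {𝕜 : Type*} [NormedField 𝕜] {x : 𝕜}

lemma hasSum_choose_sub_mul_geometric (hx : ‖x‖ < 1) {i k : ℕ} (hik : i ≤ k) :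
    HasSum (fun j : ℕ ↦ ((j + k - i).choose k : 𝕜) * x ^ j) (x ^ i / (1 - x) ^ (k + 1)) := by
  have hshift : HasSum (fun n : ℕ ↦ ((n + i + k - i).choose k : 𝕜) * x ^ (n + i))
      (x ^ i / (1 - x) ^ (k + 1)) := by
    have h := (hasSum_choose_mul_geometric_of_norm_lt_one k hx).mul_left (x ^ i)
    rw [mul_one_div] at h
    refine h.congr_fun fun n ↦ ?_
    rw [show n + i + k - i = n + k by omega, pow_add]
    ring
  have hinit : ∑ j ∈ range i, ((j + k - i).choose k : 𝕜) * x ^ j = 0 :=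
    sum_eq_zero fun j hj ↦ by
      rw [Nat.choose_eq_zero_of_lt (by have := mem_range.mp hj; omega), Nat.cast_zero, zero_mul]
  have h := (hasSum_nat_add_iff (f := fun j : ℕ ↦ ((j + k - i).choose k : 𝕜) * x ^ j) i).mp hshift
  rwa [hinit, add_zero] at h

theorem hasSum_succ_pow_mul_geometric (hx : ‖x‖ < 1) (k : ℕ) :
    HasSum (fun j : ℕ ↦ ((j : 𝕜) + 1) ^ k * x ^ j)
      ((∑ i ∈ range (k + 1), (eulerianNum k i : 𝕜) * x ^ i) / (1 - x) ^ (k + 1)) := by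
  have h := hasSum_sum fun i (hi : i ∈ range (k + 1)) ↦
    (hasSum_choose_sub_mul_geometric hx (Nat.lt_succ_iff.mp (mem_range.mp hi))).mul_left
      (eulerianNum k i : 𝕜)
  simp only [← mul_div_assoc, ← sum_div] at h
  refine h.congr_fun fun j ↦ ?_
  rw [← Nat.cast_succ, ← Nat.cast_pow, succ_pow_eq_sum_eulerianNum_mul_choose, Nat.cast_sum,
    sum_mul]
  push_cast
  exact sum_congr rfl fun i _ ↦ by ring

end Generating

lemma hasSum_eulerianPoly {x : ℂ} (hx : ‖x‖ < 1) (k : ℕ) :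
    HasSum (fun j : ℕ ↦ ((j : ℂ) + 1) ^ k * x ^ j) (eulerianPoly k x / (1 - x) ^ (k + 1)) :=
  hasSum_succ_pow_mul_geometric hx k

lemma summable_succ_pow_mul_geometric {r : ℝ} (hr0 : 0 ≤ r) (hr1 : r < 1) (k : ℕ) :
    Summable (fun n : ℕ ↦ ((n : ℝ) + 1) ^ k * r ^ n) :=
  (hasSum_succ_pow_mul_geometric (by rwa [Real.norm_of_nonneg hr0]) k).summable

def diagonalSplitEquiv : (ℕ × ℕ) ⊕ (ℕ × ℕ) ≃ ℕ × ℕ where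
  toFun := Sum.elim (fun p ↦ (p.1, p.1 + p.2)) (fun p ↦ (p.1 + p.2 + 1, p.1))
  invFun p := if p.1 ≤ p.2 then .inl (p.1, p.2 - p.1) else .inr (p.2, p.1 - p.2 - 1)
  left_inv := by
    rintro (⟨n, d⟩ | ⟨j, d⟩)
    · simp
    · simp only [Sum.elim_inr, show ¬ j + d + 1 ≤ j by omega, if_false, Sum.inr.injEq,
        Prod.mk.injEq, true_and]
      omega
  right_inv := by
    rintro ⟨n, j⟩
    by_cases h : n ≤ j
    · simp only [h, if_true, Sum.elim_inl, Prod.mk.injEq, true_and]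
      omega
    · simp only [h, if_false, Sum.elim_inr, Prod.mk.injEq, and_true]
      omega

lemma HasSum.of_diagonalSplit {α : Type*} [AddCommMonoid α] [TopologicalSpace α] [ContinuousAdd α]
    {f : ℕ × ℕ → α} {a b : α} (hupper : HasSum (fun p : ℕ × ℕ ↦ f (p.1, p.1 + p.2)) a)
    (hlower : HasSum (fun p : ℕ × ℕ ↦ f (p.1 + p.2 + 1, p.1)) b) : HasSum f (a + b) :=
  diagonalSplitEquiv.hasSum_iff.mp (hupper.sum hlower)

lemma summable_of_norm_le_succ_pow_mul_geometric {E : Type*} [NormedAddCommGroup E]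
    [CompleteSpace E] {f : ℕ × ℕ → E} {r : ℝ} (hr0 : 0 ≤ r) (hr1 : r < 1) (k l : ℕ)
    (hf : ∀ i j, ‖f (i, j)‖ ≤ ((i : ℝ) + 1) ^ k * r ^ i * (((j : ℝ) + 1) ^ l * r ^ j)) :
    Summable f :=
  .of_norm_bounded ((summable_succ_pow_mul_geometric hr0 hr1 k).mul_of_nonneg
    (summable_succ_pow_mul_geometric hr0 hr1 l) (fun _ ↦ by positivity) (fun _ ↦ by positivity))
    fun p ↦ hf p.1 p.2

lemma one_sub_ne_zero_of_norm_lt_one {R : Type*} [NormedRing R] [NormOneClass R] {x : R}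
    (hx : ‖x‖ < 1) : 1 - x ≠ 0 := by
  rw [sub_ne_zero]
  rintro rfl
  exact (norm_one (α := R) ▸ hx).false

section Lambert

/-- Entry `(n + 1, j + 1)` of the double series `∑_{n, j ≥ 1} nᵐ (a qⁿ)ʲ`. -/
def lambertTerm (m : ℕ) (q a : ℂ) (p : ℕ × ℕ) : ℂ :=
  ((p.1 : ℂ) + 1) ^ m * (a * q ^ (p.1 + 1)) ^ (p.2 + 1)

def binomialTerm (m k : ℕ) (q a : ℂ) (p : ℕ × ℕ) : ℂ :=
  ((p.1 : ℂ) + 1) ^ (m - k) * a ^ (p.1 + 1) * q ^ ((p.1 + 1) ^ 2 + (p.1 + 1)) *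
    (((p.2 : ℂ) + 1) ^ k * (q ^ (p.1 + 1)) ^ p.2)

variable (m : ℕ) {q a : ℂ}

lemma norm_natCast_add_one (n : ℕ) : ‖(n : ℂ) + 1‖ = (n : ℝ) + 1 := by
  exact_mod_cast Complex.norm_natCast (n + 1)

lemma norm_mul_pow_le (ha : ‖a‖ ≤ 1) (n : ℕ) : ‖a * q ^ n‖ ≤ ‖q‖ ^ n := by
  rw [norm_mul, norm_pow]
  exact mul_le_of_le_one_left (by positivity) ha

lemma summable_lambertTerm (hq : ‖q‖ < 1) (ha : ‖a‖ ≤ 1) : Summable (lambertTerm m q a) := by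
  refine summable_of_norm_le_succ_pow_mul_geometric (norm_nonneg q) hq m 0 fun n j ↦ ?_
  calc ‖lambertTerm m q a (n, j)‖ = ((n : ℝ) + 1) ^ m * ‖a * q ^ (n + 1)‖ ^ (j + 1) := by
        rw [lambertTerm, norm_mul, norm_pow, norm_pow, norm_natCast_add_one]
    _ ≤ ((n : ℝ) + 1) ^ m * (‖q‖ ^ (n + 1)) ^ (j + 1) := by gcongr; exact norm_mul_pow_le ha _
    _ ≤ ((n : ℝ) + 1) ^ m * ‖q‖ ^ (n + j) := by
        rw [← pow_mul]
        exact mul_le_mul_of_nonneg_left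
          (pow_le_pow_of_le_one (norm_nonneg q) hq.le (by nlinarith)) (by positivity)
    _ = _ := by ring

lemma summable_binomialTerm (hq : ‖q‖ < 1) (ha : ‖a‖ ≤ 1) (k : ℕ) :
    Summable (binomialTerm m k q a) := by
  refine summable_of_norm_le_succ_pow_mul_geometric (norm_nonneg q) hq (m - k) k fun j d ↦ ?_
  have hr0 := norm_nonneg q
  rw [binomialTerm]
  simp only [norm_mul, norm_pow, norm_natCast_add_one, ← pow_mul]
  have h1 : ‖a‖ ^ (j + 1) ≤ 1 := pow_le_one₀ (norm_nonneg a) ha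
  have h2 : ‖q‖ ^ ((j + 1) ^ 2 + (j + 1)) ≤ ‖q‖ ^ j :=
    pow_le_pow_of_le_one hr0 hq.le (by nlinarith)
  have h3 : ‖q‖ ^ ((j + 1) * d) ≤ ‖q‖ ^ d := pow_le_pow_of_le_one hr0 hq.le (by nlinarith)
  calc ((j : ℝ) + 1) ^ (m - k) * ‖a‖ ^ (j + 1) * ‖q‖ ^ ((j + 1) ^ 2 + (j + 1)) *
        (((d : ℝ) + 1) ^ k * ‖q‖ ^ ((j + 1) * d))
      ≤ ((j : ℝ) + 1) ^ (m - k) * 1 * ‖q‖ ^ j * (((d : ℝ) + 1) ^ k * ‖q‖ ^ d) := by gcongr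
    _ = _ := by ring

lemma norm_mul_pow_succ_lt_one (hq : ‖q‖ < 1) (ha : ‖a‖ ≤ 1) (n : ℕ) :
    ‖a * q ^ (n + 1)‖ < 1 :=
  (norm_mul_pow_le ha _).trans_lt (pow_lt_one₀ (norm_nonneg q) hq (Nat.succ_ne_zero n))

lemma norm_pow_succ_lt_one (hq : ‖q‖ < 1) (n : ℕ) : ‖q ^ (n + 1)‖ < 1 := by
  rw [norm_pow]
  exact pow_lt_one₀ (norm_nonneg q) hq (Nat.succ_ne_zero n)

lemma hasSum_lambertTerm_row (hq : ‖q‖ < 1) (ha : ‖a‖ ≤ 1) (n : ℕ) :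
    HasSum (fun j ↦ lambertTerm m q a (n, j))
      (a * ((n : ℂ) + 1) ^ m * q ^ (n + 1) / (1 - a * q ^ (n + 1))) := by
  rw [show a * ((n : ℂ) + 1) ^ m * q ^ (n + 1) / (1 - a * q ^ (n + 1))
      = ((n : ℂ) + 1) ^ m * (a * q ^ (n + 1)) * (1 - a * q ^ (n + 1))⁻¹ by ring]
  refine ((hasSum_geometric_of_norm_lt_one (norm_mul_pow_succ_lt_one hq ha n)).mul_left
    _).congr_fun fun j ↦ ?_
  rw [lambertTerm, pow_succ']
  ring

lemma hasSum_lambertTerm_upper (hq : ‖q‖ < 1) (ha : ‖a‖ ≤ 1) (n : ℕ) :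
    HasSum (fun d ↦ lambertTerm m q a (n, n + d))
      (((n : ℂ) + 1) ^ m * a ^ (n + 1) * q ^ ((n + 1) ^ 2) / (1 - a * q ^ (n + 1))) := by
  rw [show ((n : ℂ) + 1) ^ m * a ^ (n + 1) * q ^ ((n + 1) ^ 2) / (1 - a * q ^ (n + 1))
      = ((n : ℂ) + 1) ^ m * (a * q ^ (n + 1)) ^ (n + 1) * (1 - a * q ^ (n + 1))⁻¹ by
    rw [mul_pow, ← pow_mul, ← sq]; ring]
  refine ((hasSum_geometric_of_norm_lt_one (norm_mul_pow_succ_lt_one hq ha n)).mul_left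
    _).congr_fun fun d ↦ ?_
  rw [lambertTerm, show n + d + 1 = n + 1 + d by omega, pow_add]
  ring

lemma lambertTerm_lower_eq_sum (j d : ℕ) :
    lambertTerm m q a (j + d + 1, j)
      = ∑ k ∈ range (m + 1), (m.choose k : ℂ) * binomialTerm m k q a (j, d) := by
  have hbase : ((j + d + 1 : ℕ) : ℂ) + 1 = ((d : ℂ) + 1) + ((j : ℂ) + 1) := by push_cast; ring
  have hpow : (a * q ^ (j + d + 1 + 1)) ^ (j + 1)
      = a ^ (j + 1) * q ^ ((j + 1) ^ 2 + (j + 1)) * (q ^ (j + 1)) ^ d := by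
    rw [mul_pow, ← pow_mul, ← pow_mul, mul_assoc, ← pow_add]
    congr 3
    ring
  rw [lambertTerm, hbase, hpow, add_pow, sum_mul]
  refine sum_congr rfl fun k _ ↦ ?_
  rw [binomialTerm]
  ring

lemma eulerianPoly_zero (t : ℂ) : eulerianPoly 0 t = 1 := by
  simp [eulerianPoly, eulerianNum]

lemma hasSum_binomialTerm_row (hq : ‖q‖ < 1) (k j : ℕ) :
    HasSum (fun d ↦ binomialTerm m k q a (j, d))
      (((j : ℂ) + 1) ^ (m - k) * a ^ (j + 1) * q ^ ((j + 1) ^ 2 + (j + 1)) *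
        eulerianPoly k (q ^ (j + 1)) / (1 - q ^ (j + 1)) ^ (k + 1)) := by
  simp only [binomialTerm, mul_div_assoc]
  exact (hasSum_eulerianPoly (norm_pow_succ_lt_one hq j) k).mul_left _

lemma upper_add_eulerian_zero_eq (hq : ‖q‖ < 1) (ha : ‖a‖ ≤ 1) (n : ℕ) :
    ((n : ℂ) + 1) ^ m * a ^ (n + 1) * q ^ ((n + 1) ^ 2) / (1 - a * q ^ (n + 1))
      + ((n : ℂ) + 1) ^ (m - 0) * a ^ (n + 1) * q ^ ((n + 1) ^ 2 + (n + 1)) *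
        eulerianPoly 0 (q ^ (n + 1)) / (1 - q ^ (n + 1)) ^ (0 + 1)
      = ((n : ℂ) + 1) ^ m * (1 - a * q ^ (2 * (n + 1))) * a ^ (n + 1) *
          q ^ ((n + 1) ^ 2) / ((1 - q ^ (n + 1)) * (1 - a * q ^ (n + 1))) := by
  have hx := one_sub_ne_zero_of_norm_lt_one (norm_pow_succ_lt_one hq n)
  have hy := one_sub_ne_zero_of_norm_lt_one (norm_mul_pow_succ_lt_one hq ha n)
  rw [eulerianPoly_zero, Nat.sub_zero, zero_add, pow_one, pow_add q ((n + 1) ^ 2),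
    two_mul, pow_add q (n + 1)]
  generalize q ^ (n + 1) = x at *
  field_simp
  ring

end Lambert

theorem stmt17_general (m : ℕ) (q a : ℂ) (hq : ‖q‖ < 1) (ha : ‖a‖ ≤ 1) :
    ∑' n : ℕ, a * ((n : ℂ) + 1) ^ m * q ^ (n + 1) / (1 - a * q ^ (n + 1))
      = (∑' n : ℕ, ((n : ℂ) + 1) ^ m * (1 - a * q ^ (2 * (n + 1))) * a ^ (n + 1) *
            q ^ ((n + 1) ^ 2) / ((1 - q ^ (n + 1)) * (1 - a * q ^ (n + 1))))
        + ∑ k ∈ Finset.Icc 1 m, (m.choose k : ℂ) *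
            ∑' n : ℕ, ((n : ℂ) + 1) ^ (m - k) * a ^ (n + 1) * q ^ ((n + 1) ^ 2 + (n + 1)) *
              eulerianPoly k (q ^ (n + 1)) / (1 - q ^ (n + 1)) ^ (k + 1) := by
  have hF := summable_lambertTerm m hq ha
  have hupper : Summable fun p : ℕ × ℕ ↦ lambertTerm m q a (p.1, p.1 + p.2) :=
    hF.comp_injective (diagonalSplitEquiv.injective.comp Sum.inl_injective)
  have hU := hupper.hasSum.prod_fiberwise (hasSum_lambertTerm_upper m hq ha)
  have hT k := (summable_binomialTerm m hq ha k).hasSum.prod_fiberwise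
    (hasSum_binomialTerm_row m (a := a) hq k)
  have hlower : HasSum (fun p : ℕ × ℕ ↦ lambertTerm m q a (p.1 + p.2 + 1, p.1))
      (∑ k ∈ range (m + 1), (m.choose k : ℂ) * ∑' p, binomialTerm m k q a p) := by
    simp only [lambertTerm_lower_eq_sum]
    exact hasSum_sum fun k _ ↦ (summable_binomialTerm m hq ha k).hasSum.mul_left _
  calc _ = ∑' p, lambertTerm m q a p :=
        (hF.hasSum.prod_fiberwise (hasSum_lambertTerm_row m hq ha)).tsum_eq
    _ = ∑' p : ℕ × ℕ, lambertTerm m q a (p.1, p.1 + p.2)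
          + ∑ k ∈ range (m + 1), (m.choose k : ℂ) * ∑' p, binomialTerm m k q a p :=
        (hupper.hasSum.of_diagonalSplit hlower).tsum_eq
    _ = _ := by
      rw [← hU.tsum_eq, sum_congr rfl fun k _ ↦ by rw [← (hT k).tsum_eq], range_eq_Ico,
        sum_eq_sum_Ico_succ_bot (by omega : 0 < m + 1), zero_add, Ico_add_one_right_eq_Icc,
        ← add_assoc, Nat.choose_zero_right, Nat.cast_one, one_mul,
        ← hU.summable.tsum_add (hT 0).summable, tsum_congr (upper_add_eulerian_zero_eq m hq ha)]

theorem stmt17 (m : ℕ) (q a : ℂ) (hq : ‖q‖ < 1) (ha : ‖a‖ ≤ 1)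
    (ha1 : ∀ n : ℕ, 1 ≤ n → a * q ^ n ≠ 1) :
    ∑' n : ℕ, a * ((n : ℂ) + 1) ^ m * q ^ (n + 1) / (1 - a * q ^ (n + 1))
      = (∑' n : ℕ, ((n : ℂ) + 1) ^ m * (1 - a * q ^ (2 * (n + 1))) * a ^ (n + 1) *
            q ^ ((n + 1) ^ 2) / ((1 - q ^ (n + 1)) * (1 - a * q ^ (n + 1))))
        + ∑ k ∈ Finset.Icc 1 m, (m.choose k : ℂ) *
            ∑' n : ℕ, ((n : ℂ) + 1) ^ (m - k) * a ^ (n + 1) * q ^ ((n + 1) ^ 2 + (n + 1)) *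
              eulerianPoly k (q ^ (n + 1)) / (1 - q ^ (n + 1)) ^ (k + 1) :=
  stmt17_general m q a hq ha
end

section
/- For all natural numbers n ≥ 1 and N ≥ 1, d(n, N) = t(n, N) − t(n − N, N), where d(n, N) is the number of positive divisors of n that are ≤ N, and t(m, N) is the sum over partitions π of m into distinct parts with largest part minus smallest part ≤ N − 1 of (−1)^{ℓ(π)−1} · s(π), with ℓ(π) the number of parts and s(π) the smallest part (and t(m, N) = 0 if m ≤ 0). -/
open Finset

/-- `d n N`: the number of positive divisors of `n` that are at most `N`. -/
def dCount (n N : ℕ) : ℕ := ((Finset.Icc 1 N).filter (fun d => d ∣ n)).card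

/-- `tSum m N`: the alternating sum `∑ (-1)^{ℓ(π)-1} s(π)` over partitions `π` of `m`
into distinct parts whose largest part minus smallest part is at most `N - 1`.
Such a partition is identified with the finset of its parts. -/
def tSum (m N : ℕ) : ℤ :=
  ∑ S ∈ (Finset.Icc 1 m).powerset.filter
      (fun S => S.sum id = m ∧ ∀ x ∈ S, ∀ y ∈ S, x - y ≤ N - 1),
    if h : S.Nonempty then (-1 : ℤ) ^ (S.card - 1) * (S.min' h : ℤ) else 0

/-!
For a partition `S` counted by `t(n, N)`, the number of `j ∈ [1, n]` with `S ⊆ [j, j + N)` is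
`s(S) - max(g(S) - N, 0)`. Replacing the smallest part `s` by `s + N` is a bijection, preserving
the number of parts, from the partitions counted by `t(n - N, N)` onto those counted by `t(n, N)`
with `g > N`, and it turns `s` into `g - N`. Hence `t(n, N) - t(n - N, N)` is the sum over
`j ∈ [1, n]` of the signed counts `∑ (-1)^(|S| - 1)` of the sets `S ⊆ [j, j + N)` with sum `n`.

Induction on `N`, toggling the top element `j + N` of the window, reduces the claim to the
following: the signed count of pairs `(j ≥ 1, T ⊆ [0, M))` with `j (|T| + 1) + ΣT = m` is `1`
if `m ≥ 1` and `m ≡ 1 (mod M + 1)`, and `0` otherwise. Toggling the largest and the smallest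
element of `[0, M]` gives two recursions for this count; combined, they show that the count for
`[0, M]` satisfies the same difference equation with step `M + 2` as the claimed value.
-/

lemma Finset.sum_powerset_map {α β M : Type*} [AddCommMonoid M] [DecidableEq β] (s : Finset α)
    (e : α ↪ β) (f : Finset β → M) :
    ∑ T ∈ (s.map e).powerset, f T = ∑ V ∈ s.powerset, f (V.map e) := by
  classical
  simp_rw [map_eq_image, powerset_image]
  exact sum_image fun _ _ _ _ h => image_injective e.injective h

section Replace

variable {α : Type*} [DecidableEq α] {S : Finset α} {a b : α}

lemma Finset.card_insert_erase (ha : a ∈ S) (hb : b ∉ S) : #(insert b (S.erase a)) = #S := by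
  rw [card_insert_of_notMem fun h => hb (mem_of_mem_erase h), card_erase_add_one ha]

lemma Finset.sum_insert_erase_add {M : Type*} [AddCommMonoid M] (f : α → M) (ha : a ∈ S)
    (hb : b ∉ S) : ∑ x ∈ insert b (S.erase a), f x + f a = ∑ x ∈ S, f x + f b := by
  rw [sum_insert fun h => hb (mem_of_mem_erase h), add_assoc, sum_erase_add _ _ ha, add_comm]

lemma Finset.insert_erase_insert_erase (ha : a ∈ S) (hb : b ∉ S) :
    insert a ((insert b (S.erase a)).erase b) = S := by
  rw [erase_insert fun h => hb (mem_of_mem_erase h), insert_erase ha]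

end Replace

lemma Int.eq_of_sub_shift_eq {G : Type*} [AddCommGroup G] {f g : ℤ → G} {c : ℤ} (hc : 0 < c)
    (hle : ∀ m ≤ 0, f m = g m) (h : ∀ m, f m - f (m - c) = g m - g (m - c)) : f = g := by
  have hper : Function.Periodic (f - g) c := fun m => by
    have := h (m + c)
    rw [add_sub_cancel_right] at this
    simp only [Pi.sub_apply]
    rw [sub_eq_sub_iff_sub_eq_sub.1 this]
  funext m
  rcases le_or_gt m 0 with hm | hm
  · exact hle m hm
  · rw [← sub_eq_zero, ← Pi.sub_apply, ← hper.sub_int_mul_eq m, Int.cast_id, Pi.sub_apply,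
      sub_eq_zero]
    exact hle _ (by nlinarith)

-- The number of `j ≥ 1` with `j * c = X`, when `0 < c`.
def posMultipleCount (c X : ℤ) : ℤ := if 0 < X ∧ c ∣ X then 1 else 0

lemma posMultipleCount_of_lt {c X : ℤ} (h : X < c) : posMultipleCount c X = 0 :=
  if_neg fun ⟨hX, hdvd⟩ => (Int.le_of_dvd hX hdvd).not_gt h

lemma posMultipleCount_sub_self {c : ℤ} (hc : 0 < c) (X : ℤ) :
    posMultipleCount c (X - c) = posMultipleCount c X - if X = c then 1 else 0 := by
  by_cases hXc : X = c
  · rw [hXc, sub_self, posMultipleCount_of_lt hc, if_pos rfl, posMultipleCount,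
      if_pos ⟨hc, dvd_rfl⟩, sub_self]
  have hpos : c ∣ X → (0 < X - c ↔ 0 < X) := fun hdvd =>
    ⟨fun h => by omega, fun h => by have := Int.le_of_dvd h hdvd; omega⟩
  rw [if_neg hXc, sub_zero, posMultipleCount, posMultipleCount]
  by_cases hdvd : c ∣ X
  · simp only [dvd_sub_self_right, hdvd, hpos hdvd]
  · simp only [dvd_sub_self_right, hdvd, and_false]

lemma sum_Icc_ite_add_mul_eq (a c n : ℕ) (hc : 0 < c) :
    (∑ j ∈ Icc 1 n, if a + j * c = n then 1 else 0 : ℤ) = posMultipleCount c (n - a) := by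
  have hsol : ∀ j : ℕ, a + j * c = n ↔ (n - a : ℤ) = c * j := fun j => by
    rw [sub_eq_iff_eq_add', mul_comm]; norm_cast; exact eq_comm
  rw [sum_boole, posMultipleCount]
  split_ifs with h
  · obtain ⟨hpos, k, hk⟩ := h
    have hk0 : 0 < k := pos_of_mul_pos_right (hk ▸ hpos) (by positivity)
    lift k to ℕ using hk0.le
    have hk_mem : k ∈ Icc 1 n := by
      have := (hsol k).2 hk
      exact mem_Icc.2 ⟨by exact_mod_cast hk0, by nlinarith⟩
    rw [filter_congr fun j _ => by rw [hsol, hk, mul_right_inj' (by positivity), Nat.cast_inj],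
      filter_eq, if_pos hk_mem, card_singleton, Nat.cast_one]
  · rw [filter_false_of_mem, card_empty, Nat.cast_zero]
    intro j hj hsum
    rw [hsol] at hsum
    exact h ⟨hsum ▸ mul_pos (by positivity) (by exact_mod_cast (mem_Icc.1 hj).1), j, hsum⟩

-- Signed count of the pairs `(j ≥ 1, T ⊆ [0, M))` with `j * (#T + r) + ∑ T = m`.
def signedPairCount (r M : ℕ) (m : ℤ) : ℤ :=
  ∑ T ∈ (range M).powerset, (-1) ^ #T * posMultipleCount (#T + r) (m - ∑ t ∈ T, (t : ℤ))

lemma signedPairCount_of_nonpos {r : ℕ} (hr : 0 < r) (M : ℕ) {m : ℤ} (hm : m ≤ 0) :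
    signedPairCount r M m = 0 :=
  sum_eq_zero fun T _ => by
    rw [posMultipleCount_of_lt, mul_zero]
    have : 0 ≤ ∑ t ∈ T, (t : ℤ) := by positivity
    omega

lemma signedPairCount_succ (r M : ℕ) (m : ℤ) :
    signedPairCount r (M + 1) m = signedPairCount r M m - signedPairCount (r + 1) M (m - M) := by
  unfold signedPairCount
  rw [range_add_one, sum_powerset_insert notMem_range_self, sub_eq_add_neg, ← sum_neg_distrib]
  congr 1
  refine sum_congr rfl fun T hT => ?_
  have hM : M ∉ T := fun h => notMem_range_self (mem_powerset.1 hT h)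
  rw [card_insert_of_notMem hM, sum_insert hM, pow_succ]
  push_cast
  ring_nf

-- Split off `0 ∈ T` and translate the rest of `T` down by one, which trades `j` for `j + 1`; the
-- two resulting boundary terms `j = 1` cancel.
lemma signedPairCount_succ' {r : ℕ} (hr : 0 < r) (M : ℕ) (m : ℤ) :
    signedPairCount r (M + 1) m
      = signedPairCount r M (m + r) - signedPairCount (r + 1) M (m + r + 1) := by
  have hrange : range (M + 1) = insert 0 ((range M).map (addLeftEmbedding 1)) := by
    ext (_ | x) <;> simp [add_comm 1]
  unfold signedPairCount
  rw [hrange, sum_powerset_insert (by simp), sum_powerset_map, sum_powerset_map,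
    ← sum_sub_distrib, ← sum_add_distrib]
  refine sum_congr rfl fun V _ => ?_
  have h0 : 0 ∉ V.map (addLeftEmbedding 1) := by simp
  rw [card_insert_of_notMem h0, sum_insert h0, card_map, sum_map]
  set X : ℤ := m + r - ∑ v ∈ V, (v : ℤ)
  set c : ℤ := #V + r
  have hc : 0 < c := by positivity
  have h1 := posMultipleCount_sub_self hc X
  have h2 := posMultipleCount_sub_self (c := c + 1) (by omega) (X + 1)
  simp only [add_left_inj] at h2
  simp only [addLeftEmbedding_apply]
  have e1 : m - ∑ v ∈ V, ((1 + v : ℕ) : ℤ) = X - c := by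
    simp only [X, c, Nat.cast_add, Nat.cast_one, sum_add_distrib, sum_const, nsmul_eq_mul]
    ring
  have e2 : m - (((0 : ℕ) : ℤ) + ∑ v ∈ V, ((1 + v : ℕ) : ℤ)) = X + 1 - (c + 1) := by
    rw [Nat.cast_zero, zero_add, e1]; ring
  have e3 : (((#V + 1 : ℕ) : ℤ) + r) = c + 1 := by push_cast; ring
  have e4 : ((#V : ℤ) + ((r + 1 : ℕ) : ℤ)) = c + 1 := by push_cast; ring
  have e5 : m + r + 1 - ∑ v ∈ V, (v : ℤ) = X + 1 := by ring
  rw [e1, e2, e3, e4, e5, h1, h2, pow_succ]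
  ring

lemma signedPairCount_one (M : ℕ) (m : ℤ) :
    signedPairCount 1 M m = posMultipleCount (M + 1) (m + M) := by
  induction M generalizing m with
  | zero => simp [signedPairCount]
  | succ M ih =>
    have hsub : ∀ m : ℤ, signedPairCount 1 (M + 1) m - signedPairCount 1 (M + 1) (m - (M + 2))
        = signedPairCount 1 M m - signedPairCount 1 M (m - (M + 1)) := fun m => by
      have htop := signedPairCount_succ 1 M m
      have hbot := signedPairCount_succ' one_pos M (m - (M + 2))
      rw [show m - (M + 2) + (1 : ℕ) = m - (M + 1) by push_cast; ring,
        show m - (M + 1) + 1 = m - M by ring] at hbot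
      rw [htop, hbot]
      ring
    have hM : (0 : ℤ) < M + 1 := by positivity
    refine congrFun (Int.eq_of_sub_shift_eq (f := signedPairCount 1 (M + 1))
      (g := fun m => posMultipleCount ((M + 1 : ℕ) + 1) (m + (M + 1 : ℕ))) (c := M + 2)
      (by positivity) (fun m hm => ?_) (fun m => ?_)) m
    · rw [signedPairCount_of_nonpos one_pos _ hm, posMultipleCount_of_lt (by push_cast; omega)]
    · rw [hsub, ih, ih, show m - (M + 1) + M = m + M - (M + 1) by ring,
        posMultipleCount_sub_self hM, show m - (M + 2) + ((M + 1 : ℕ) : ℤ)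
          = m + ((M + 1 : ℕ) : ℤ) - (((M + 1 : ℕ) : ℤ) + 1) by push_cast; ring,
        posMultipleCount_sub_self (by positivity)]
      push_cast
      simp only [sub_sub_cancel]
      split_ifs <;> omega

-- Signed count of the sets `j + T ⊆ [j, j + N)` with sum `n`.
def windowCount (j N n : ℕ) : ℤ :=
  ∑ T ∈ (range N).powerset, (-1) ^ #T * if ∑ t ∈ T, t + j * #T = n then 1 else 0

lemma windowCount_succ (j N n : ℕ) :
    windowCount j (N + 1) n = windowCount j N n
      - ∑ T ∈ (range N).powerset,
          (-1) ^ #T * if (∑ t ∈ T, t + N) + j * (#T + 1) = n then 1 else 0 := by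
  unfold windowCount
  rw [range_add_one, sum_powerset_insert notMem_range_self, sub_eq_add_neg, ← sum_neg_distrib]
  congr 1
  refine sum_congr rfl fun T hT => ?_
  have hN : N ∉ T := fun h => notMem_range_self (mem_powerset.1 hT h)
  rw [card_insert_of_notMem hN, sum_insert hN, pow_succ, add_comm N]
  ring

lemma dCount_succ (n N : ℕ) : dCount n (N + 1) = dCount n N + if N + 1 ∣ n then 1 else 0 := by
  rw [dCount, dCount, ← insert_Icc_right_eq_Icc_add_one (by omega), filter_insert]
  split_ifs
  · exact card_insert_of_notMem fun h => by simp at h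
  · rfl

lemma sum_Icc_windowCount {n : ℕ} (hn : 0 < n) (N : ℕ) :
    ∑ j ∈ Icc 1 n, windowCount j N n = -dCount n N := by
  induction N with
  | zero => simp [windowCount, dCount, hn.ne]
  | succ N ih =>
    have hpair : ∀ T : Finset ℕ,
        (∑ j ∈ Icc 1 n, if (∑ t ∈ T, t + N) + j * (#T + 1) = n then 1 else 0 : ℤ)
          = posMultipleCount (#T + 1) (n - N - ∑ t ∈ T, (t : ℤ)) := fun T => by
      rw [sum_Icc_ite_add_mul_eq _ _ _ (Nat.succ_pos _)]
      push_cast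
      ring_nf
    calc ∑ j ∈ Icc 1 n, windowCount j (N + 1) n
        = ∑ j ∈ Icc 1 n, windowCount j N n - signedPairCount 1 N (n - N) := by
          simp_rw [windowCount_succ, sum_sub_distrib]
          rw [sum_comm (s := Icc 1 n)]
          simp_rw [← mul_sum, hpair]
          rfl
      _ = -dCount n (N + 1) := by
          rw [ih, signedPairCount_one, sub_add_cancel, dCount_succ, posMultipleCount]
          simp only [Nat.cast_pos.2 hn, true_and]
          norm_cast
          split_ifs <;> push_cast <;> ring

def narrowPartitions (m N : ℕ) : Finset (Finset ℕ) :=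
  (Finset.Icc 1 m).powerset.filter (fun S => S.sum id = m ∧ ∀ x ∈ S, ∀ y ∈ S, x - y ≤ N - 1)

lemma mem_narrowPartitions {m N : ℕ} {S : Finset ℕ} :
    S ∈ narrowPartitions m N
      ↔ (∀ x ∈ S, 0 < x) ∧ ∑ x ∈ S, x = m ∧ ∀ x ∈ S, ∀ y ∈ S, x - y ≤ N - 1 := by
  simp only [narrowPartitions, mem_filter, mem_powerset, id]
  refine ⟨fun ⟨hsub, hsum, hwin⟩ => ⟨fun x hx => (mem_Icc.1 (hsub hx)).1, hsum, hwin⟩,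
    fun ⟨hpos, hsum, hwin⟩ => ⟨fun x hx => mem_Icc.2 ⟨hpos x hx, ?_⟩, hsum, hwin⟩⟩
  exact hsum ▸ single_le_sum (f := fun x => x) (fun _ _ => Nat.zero_le _) hx

lemma nonempty_of_mem_narrowPartitions {m N : ℕ} (hm : 0 < m) {S : Finset ℕ}
    (hS : S ∈ narrowPartitions m N) : S.Nonempty := by
  rw [nonempty_iff_ne_empty]
  rintro rfl
  simp [(mem_narrowPartitions.1 hS).2.1.symm] at hm

lemma le_of_mem_narrowPartitions {m N : ℕ} {S : Finset ℕ} (hS : S ∈ narrowPartitions m N)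
    {x : ℕ} (hx : x ∈ S) : x ≤ m :=
  (mem_narrowPartitions.1 hS).2.1 ▸ single_le_sum (f := fun x => x) (fun _ _ => Nat.zero_le _) hx

def smallest (S : Finset ℕ) : ℕ := if h : S.Nonempty then S.min' h else 0

def largest (S : Finset ℕ) : ℕ := if h : S.Nonempty then S.max' h else 0

section Extremes

variable {S : Finset ℕ} {a x : ℕ}

lemma smallest_mem (h : S.Nonempty) : smallest S ∈ S := by
  rw [smallest, dif_pos h]; exact S.min'_mem h

lemma largest_mem (h : S.Nonempty) : largest S ∈ S := by
  rw [largest, dif_pos h]; exact S.max'_mem h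

lemma smallest_le (hx : x ∈ S) : smallest S ≤ x := by
  rw [smallest, dif_pos ⟨x, hx⟩]; exact S.min'_le x hx

lemma le_largest (hx : x ∈ S) : x ≤ largest S := by
  rw [largest, dif_pos ⟨x, hx⟩]; exact S.le_max' x hx

lemma smallest_eq_of_forall_le (ha : a ∈ S) (h : ∀ x ∈ S, a ≤ x) : smallest S = a :=
  le_antisymm (smallest_le ha) (h _ (smallest_mem ⟨a, ha⟩))

lemma largest_eq_of_forall_le (ha : a ∈ S) (h : ∀ x ∈ S, x ≤ a) : largest S = a :=
  le_antisymm (h _ (largest_mem ⟨a, ha⟩)) (le_largest ha)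

end Extremes

def raiseSmallest (N : ℕ) (S : Finset ℕ) : Finset ℕ :=
  insert (smallest S + N) (S.erase (smallest S))

def lowerLargest (N : ℕ) (S : Finset ℕ) : Finset ℕ :=
  insert (largest S - N) (S.erase (largest S))

section Shift

variable {m N : ℕ} {S : Finset ℕ}

lemma raiseSmallest_spec (hN : 0 < N) (hm : 0 < m) (hS : S ∈ narrowPartitions m N) :
    raiseSmallest N S ∈ narrowPartitions (m + N) N ∧ largest (raiseSmallest N S) = smallest S + N
      ∧ smallest S + N ∉ S := by
  obtain ⟨hpos, hsum, hwin⟩ := mem_narrowPartitions.1 hS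
  have ha := smallest_mem (nonempty_of_mem_narrowPartitions hm hS)
  have hS_bound : ∀ x ∈ S, smallest S ≤ x ∧ x < smallest S + N := fun x hx =>
    ⟨smallest_le hx, by have := hwin x hx _ ha; omega⟩
  have hb : smallest S + N ∉ S := fun h => by have := hS_bound _ h; omega
  have hbound : ∀ x ∈ raiseSmallest N S, smallest S < x ∧ x ≤ smallest S + N := fun x hx => by
    rcases mem_insert.1 hx with rfl | hx
    · omega
    · have := hS_bound x (mem_of_mem_erase hx)
      have := ne_of_mem_erase hx
      omega
  refine ⟨mem_narrowPartitions.2 ⟨fun x hx => ?_, ?_, fun x hx y hy => ?_⟩,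
    largest_eq_of_forall_le (mem_insert_self _ _) fun x hx => (hbound x hx).2, hb⟩
  · have := hbound x hx; omega
  · have := sum_insert_erase_add (fun x => x) ha hb; unfold raiseSmallest; omega
  · have := hbound x hx; have := hbound y hy; omega

lemma lowerLargest_spec (hN : 0 < N) (hm : 0 < m) (hS : S ∈ narrowPartitions m N)
    (hlarge : N < largest S) :
    lowerLargest N S ∈ narrowPartitions (m - N) N ∧ smallest (lowerLargest N S) = largest S - N
      ∧ largest S - N ∉ S := by
  obtain ⟨hpos, hsum, hwin⟩ := mem_narrowPartitions.1 hS
  have hg := largest_mem (nonempty_of_mem_narrowPartitions hm hS)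
  have hS_bound : ∀ x ∈ S, largest S < x + N ∧ x ≤ largest S := fun x hx =>
    ⟨by have := hwin _ hg x hx; have := hpos x hx; omega, le_largest hx⟩
  have hb : largest S - N ∉ S := fun h => by have := hS_bound _ h; omega
  have hbound : ∀ x ∈ lowerLargest N S, largest S - N ≤ x ∧ x < largest S := fun x hx => by
    rcases mem_insert.1 hx with rfl | hx
    · omega
    · have := hS_bound x (mem_of_mem_erase hx)
      have := ne_of_mem_erase hx
      omega
  refine ⟨mem_narrowPartitions.2 ⟨fun x hx => ?_, ?_, fun x hx y hy => ?_⟩,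
    smallest_eq_of_forall_le (mem_insert_self _ _) fun x hx => (hbound x hx).1, hb⟩
  · have := hbound x hx; omega
  · have := sum_insert_erase_add (fun x => x) hg hb; unfold lowerLargest; omega
  · have := hbound x hx; have := hbound y hy; omega

end Shift

lemma tSum_eq_sum_smallest {m : ℕ} (hm : 0 < m) (N : ℕ) :
    tSum m N = ∑ S ∈ narrowPartitions m N, (-1) ^ (#S - 1) * (smallest S : ℤ) :=
  sum_congr rfl fun S hS => by
    have hne := nonempty_of_mem_narrowPartitions hm hS
    rw [dif_pos hne, smallest, dif_pos hne]

lemma tSum_sub_eq_sum_largest {n N : ℕ} (hn : 0 < n) (hN : 0 < N) :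
    tSum (n - N) N = ∑ S ∈ narrowPartitions n N, (-1) ^ (#S - 1) * ((largest S - N : ℕ) : ℤ) := by
  rw [← sum_filter_of_ne (p := fun S => N < largest S) fun S _ h => by
    by_contra hle; rw [Nat.sub_eq_zero_of_le (not_lt.1 hle)] at h; simp at h]
  rcases le_or_gt n N with hle | hlt
  · rw [Nat.sub_eq_zero_of_le hle, filter_false_of_mem fun S hS h =>
      (le_of_mem_narrowPartitions hS (largest_mem (nonempty_of_mem_narrowPartitions hn hS))).not_gt
        (by omega)]
    simp [tSum, filter_singleton]
  have hnN : 0 < n - N := by omega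
  rw [tSum_eq_sum_smallest hnN]
  have hsmall_pos : ∀ S ∈ narrowPartitions (n - N) N, 0 < smallest S := fun S hS =>
    (mem_narrowPartitions.1 hS).1 _ (smallest_mem (nonempty_of_mem_narrowPartitions hnN hS))
  have hup := fun S (hS : S ∈ narrowPartitions (n - N) N) =>
    Nat.sub_add_cancel hlt.le ▸ raiseSmallest_spec hN hnN hS
  have hdown := fun S (hS : S ∈ (narrowPartitions n N).filter (N < largest ·)) =>
    lowerLargest_spec hN hn (mem_filter.1 hS).1 (mem_filter.1 hS).2
  refine sum_nbij' (raiseSmallest N) (lowerLargest N) (fun S hS => ?_) (fun S hS => (hdown S hS).1)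
    (fun S hS => ?_) (fun S hS => ?_) (fun S hS => ?_)
  · have := hsmall_pos S hS
    exact mem_filter.2 ⟨(hup S hS).1, by rw [(hup S hS).2.1]; omega⟩
  · have hne := nonempty_of_mem_narrowPartitions hnN hS
    rw [lowerLargest, (hup S hS).2.1, Nat.add_sub_cancel]
    exact insert_erase_insert_erase (smallest_mem hne) (hup S hS).2.2
  · obtain ⟨hT, hlarge⟩ := mem_filter.1 hS
    rw [raiseSmallest, (hdown S hS).2.1, Nat.sub_add_cancel hlarge.le]
    exact insert_erase_insert_erase (largest_mem (nonempty_of_mem_narrowPartitions hn hT))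
      (hdown S hS).2.2
  · have hne := nonempty_of_mem_narrowPartitions hnN hS
    rw [(hup S hS).2.1, Nat.add_sub_cancel, raiseSmallest,
      card_insert_erase (smallest_mem hne) (hup S hS).2.2]

section Windows

variable {n N : ℕ} {S : Finset ℕ}

lemma card_filter_subset_Ico (hn : 0 < n) (hS : S ∈ narrowPartitions n N) :
    (#{j ∈ Icc 1 n | S ⊆ Ico j (j + N)} : ℤ) = smallest S - ((largest S - N : ℕ) : ℤ) := by
  obtain ⟨hpos, -, hwin⟩ := mem_narrowPartitions.1 hS
  have hne := nonempty_of_mem_narrowPartitions hn hS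
  have hs := smallest_mem hne
  have hg := largest_mem hne
  have : 0 < smallest S := hpos _ hs
  have : largest S ≤ n := le_of_mem_narrowPartitions hS hg
  have : smallest S ≤ largest S := le_largest hs
  have : largest S - smallest S ≤ N - 1 := hwin _ hg _ hs
  have hsub : ∀ j, S ⊆ Ico j (j + N) ↔ j ≤ smallest S ∧ largest S < j + N := fun j =>
    ⟨fun h => ⟨(mem_Ico.1 (h hs)).1, (mem_Ico.1 (h hg)).2⟩, fun h x hx =>
      mem_Ico.2 ⟨h.1.trans (smallest_le hx), (le_largest hx).trans_lt h.2⟩⟩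
  have hfilter : {j ∈ Icc 1 n | S ⊆ Ico j (j + N)} = Icc (largest S - N + 1) (smallest S) := by
    ext j
    simp only [mem_filter, mem_Icc, hsub]
    omega
  rw [hfilter, Nat.card_Icc]
  omega

lemma sum_narrowPartitions_subset_Ico (hn : 0 < n) {j : ℕ} (hj : 0 < j) :
    (∑ S ∈ narrowPartitions n N, if S ⊆ Ico j (j + N) then (-1) ^ (#S - 1) else 0 : ℤ)
      = -windowCount j N n := by
  have hfilter : {S ∈ narrowPartitions n N | S ⊆ Ico j (j + N)}
      = {S ∈ (Ico j (j + N)).powerset | ∑ x ∈ S, x = n} := by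
    ext S
    simp only [mem_filter, mem_powerset, mem_narrowPartitions]
    refine ⟨fun ⟨⟨_, hsum, _⟩, hsub⟩ => ⟨hsub, hsum⟩, fun ⟨hsub, hsum⟩ => ⟨⟨fun x hx => ?_, hsum,
      fun x hx y hy => ?_⟩, hsub⟩⟩
    · have := mem_Ico.1 (hsub hx); omega
    · have := mem_Ico.1 (hsub hx); have := mem_Ico.1 (hsub hy); omega
  have hIco : Ico j (j + N) = (range N).map (addLeftEmbedding j) := by
    rw [range_eq_Ico, map_add_left_Ico, add_zero]
  rw [← sum_filter, hfilter, sum_filter, hIco, sum_powerset_map, windowCount, ← sum_neg_distrib]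
  refine sum_congr rfl fun T _ => ?_
  rw [card_map, sum_map]
  have hsum : ∑ t ∈ T, (j + t) = ∑ t ∈ T, t + j * #T := by
    rw [sum_add_distrib, sum_const, smul_eq_mul, add_comm, mul_comm]
  simp only [addLeftEmbedding_apply, hsum]
  split_ifs with h
  · have : #T ≠ 0 := fun h0 => by simp [card_eq_zero.1 h0] at h; omega
    rw [← Nat.sub_add_cancel (Nat.one_le_iff_ne_zero.2 this), Nat.add_sub_cancel, pow_succ]
    ring
  · simp

/-- Refinement of Uchimura's divisor identity: `d(n,N) = t(n,N) - t(n-N,N)`. -/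
theorem stmt19 (n N : ℕ) (hn : 1 ≤ n) (hN : 1 ≤ N) :
    (dCount n N : ℤ) = tSum n N - tSum (n - N) N := by
  rw [tSum_eq_sum_smallest hn, tSum_sub_eq_sum_largest hn hN, ← sum_sub_distrib]
  calc (dCount n N : ℤ) = ∑ j ∈ Icc 1 n, -windowCount j N n := by
        rw [sum_neg_distrib, sum_Icc_windowCount hn, neg_neg]
    _ = ∑ j ∈ Icc 1 n, ∑ S ∈ narrowPartitions n N,
          if S ⊆ Ico j (j + N) then (-1) ^ (#S - 1) else 0 :=
        sum_congr rfl fun j hj => (sum_narrowPartitions_subset_Ico hn (mem_Icc.1 hj).1).symm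
    _ = ∑ S ∈ narrowPartitions n N, (-1) ^ (#S - 1) * (#{j ∈ Icc 1 n | S ⊆ Ico j (j + N)} : ℤ) := by
        rw [sum_comm]
        exact sum_congr rfl fun S _ => by rw [← sum_filter, sum_const, nsmul_eq_mul, mul_comm]
    _ = _ := sum_congr rfl fun S hS => by rw [card_filter_subset_Ico hn hS, mul_sub]
end Windows
end
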